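/- arXiv:1111.5472 — 3 statements merged into one kernel-verified Lean document; each statement's English description precedes it below -/
import Mathlib

section
/- (Generic universal truthfulness lemma.) Let M : Θ^n × R → O be ε-differentially private, and suppose player i's utility is U_i = Uo_i + Up_i where Up_i satisfies the privacy-value assumption with bound F_i. Assume that for all θ_i, θ_i', θ_{-i} and all r, if M(θ_i,θ_{-i};r) ≠ M(θ_i',θ_{-i};r) then Uo_i(θ_i, M(θ_i,θ_{-i};r)) − Uo_i(θ_i, M(θ_i',θ_{-i};r)) ≥ 2·F_i(e^ε). Then M is universally truthful for player i: for all θ_i, θ_i', θ_{-i}, r, U_i(θ_i, M(θ_i,θ_{-i};r), M, θ_{-i}) ≥ U_i(θ_i, M(θ_i',θ_{-i};r), M, θ_{-i}). -/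
/-!
ε-differential privacy bounds every likelihood ratio of outcomes under a change of player `i`'s
report by `e^ε`, so the privacy-value assumption confines the privacy utility to
`[-F(e^ε), F(e^ε)]` on every outcome. Misreporting either leaves the outcome unchanged or loses at
least `2·F(e^ε)` of outcome utility, which outweighs any difference in privacy utility.
-/

open Finset

/-- Probability that the mechanism `M` outputs `o` on report profile `θ`. -/
noncomputable def outProb {Θ O R : Type*} [Fintype R] [DecidableEq O] {n : ℕ}
    (M : (Fin n → Θ) → R → O) (μ : R → ℝ) (θ : Fin n → Θ) (o : O) : ℝ :=
  ∑ r ∈ univ.filter (fun r => M θ r = o), μ r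

lemma outProb_nonneg {Θ O R : Type*} [Fintype R] [DecidableEq O] {n : ℕ}
    (M : (Fin n → Θ) → R → O) {μ : R → ℝ} (hμ : ∀ r, 0 ≤ μ r) (θ : Fin n → Θ) (o : O) :
    0 ≤ outProb M μ θ o :=
  sum_nonneg fun r _ => hμ r

/-- A ratio with zero denominator is `0` in Lean, which is why only `0 ≤ c` is needed there. -/
lemma iSup_iSup_div_le_of_le_mul {ι : Type*} [Nonempty ι] {f : ι → ℝ} {c : ℝ}
    (hf : ∀ t, 0 ≤ f t) (hc : 0 ≤ c) (h : ∀ t t', f t ≤ c * f t') :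
    ⨆ t, ⨆ t', f t / f t' ≤ c :=
  ciSup_le fun t => ciSup_le fun t' => div_le_of_le_mul₀ (hf t') hc (h t t')

theorem stmt5_general {Θ O R : Type*} [Fintype R]
    [DecidableEq O] {n : ℕ}
    (M : (Fin n → Θ) → R → O) (μ : R → ℝ)
    (hμ0 : ∀ r, 0 ≤ μ r)
    (ε : ℝ)
    (i : Fin n)
    (Uo : Θ → O → ℝ)                 -- outcome utility Uo_i
    (Up : Θ → O → (Fin n → Θ) → ℝ)   -- privacy utility Up_i (θ_i, o, M, θ_{-i})
    (F : ℝ → ℝ) (hFmono : Monotone F)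
    -- privacy-value assumption
    (hAssum : ∀ (θi : Θ) (o : O) (θ : Fin n → Θ),
      |Up θi o θ| ≤ F (⨆ t : Θ, ⨆ t' : Θ,
        outProb M μ (Function.update θ i t) o / outProb M μ (Function.update θ i t') o))
    -- ε-differential privacy
    (hDP : ∀ (θ : Fin n → Θ) (o : O) (t t' : Θ),
      outProb M μ (Function.update θ i t) o
        ≤ Real.exp ε * outProb M μ (Function.update θ i t') o)
    -- outcome-utility gap on any outcome change
    (hGap : ∀ (θi θi' : Θ) (θ : Fin n → Θ) (r : R),
      M (Function.update θ i θi) r ≠ M (Function.update θ i θi') r →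
      Uo θi (M (Function.update θ i θi) r) - Uo θi (M (Function.update θ i θi') r)
        ≥ 2 * F (Real.exp ε)) :
    ∀ (θi θi' : Θ) (θ : Fin n → Θ) (r : R),
      Uo θi (M (Function.update θ i θi) r) + Up θi (M (Function.update θ i θi) r) θ
        ≥ Uo θi (M (Function.update θ i θi') r)
          + Up θi (M (Function.update θ i θi') r) θ := by
  intro θi θi' θ r
  have : Nonempty Θ := ⟨θi⟩
  have hUp : ∀ o, |Up θi o θ| ≤ F (Real.exp ε) := fun o =>
    (hAssum θi o θ).trans <| hFmono <| iSup_iSup_div_le_of_le_mul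
      (fun _ => outProb_nonneg M hμ0 _ o) (Real.exp_pos ε).le (hDP θ o)
  by_cases hsame : M (Function.update θ i θi) r = M (Function.update θ i θi') r
  · rw [hsame]
  · have hgain := hGap θi θi' θ r hsame
    have htruth := (abs_le.mp (hUp (M (Function.update θ i θi) r))).1
    have hlie := (abs_le.mp (hUp (M (Function.update θ i θi') r))).2
    linarith

/-- generic universal truthfulness lemma: if `M` is ε-differentially
private, player i's utility is `U_i = Uo_i + Up_i` with `Up_i` satisfying the
privacy-value assumption with bound `F_i`, and whenever a misreport changes the
outcome (for fixed randomness) the truthful outcome utility gains at least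
`2·F_i(e^ε)`, then `M` is universally truthful for player i. -/
theorem stmt5 {Θ O R : Type*} [Fintype R] [Fintype Θ] [Nonempty Θ]
    [DecidableEq O] [DecidableEq Θ] {n : ℕ}
    (M : (Fin n → Θ) → R → O) (μ : R → ℝ)
    (hμ0 : ∀ r, 0 ≤ μ r) (hμ1 : ∑ r, μ r = 1)
    (ε : ℝ) (hε : 0 ≤ ε)
    (i : Fin n)
    (Uo : Θ → O → ℝ)                 -- outcome utility Uo_i
    (Up : Θ → O → (Fin n → Θ) → ℝ)   -- privacy utility Up_i (θ_i, o, M, θ_{-i})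
    (F : ℝ → ℝ) (hFmono : Monotone F)
    -- privacy-value assumption
    (hAssum : ∀ (θi : Θ) (o : O) (θ : Fin n → Θ),
      |Up θi o θ| ≤ F (⨆ t : Θ, ⨆ t' : Θ,
        outProb M μ (Function.update θ i t) o / outProb M μ (Function.update θ i t') o))
    -- ε-differential privacy
    (hDP : ∀ (θ : Fin n → Θ) (o : O) (t t' : Θ),
      outProb M μ (Function.update θ i t) o
        ≤ Real.exp ε * outProb M μ (Function.update θ i t') o)
    -- outcome-utility gap on any outcome change
    (hGap : ∀ (θi θi' : Θ) (θ : Fin n → Θ) (r : R),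
      M (Function.update θ i θi) r ≠ M (Function.update θ i θi') r →
      Uo θi (M (Function.update θ i θi) r) - Uo θi (M (Function.update θ i θi') r)
        ≥ 2 * F (Real.exp ε)) :
    ∀ (θi θi' : Θ) (θ : Fin n → Θ) (r : R),
      Uo θi (M (Function.update θ i θi) r) + Up θi (M (Function.update θ i θi) r) θ
        ≥ Uo θi (M (Function.update θ i θi') r)
          + Up θi (M (Function.update θ i θi') r) θ :=
  stmt5_general M μ hμ0 ε i Uo Up F hFmono hAssum hDP hGap
end

section
/- For the noisy majority election mechanism, the expected number of voters whose preferred candidate wins is greater than max_{o'∈{A,B}} #{i : θ_i = o'} − 1/ε. -/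
/-!
With margin `Δ = |#A − #B|`, the mechanism loses welfare only when the noise pushes the
threshold past the margin, and then it loses exactly `Δ` satisfied voters. The relevant tail
of the discrete Laplace law has mass at most `e^{−εΔ}`, so the expected loss is at most
`Δ e^{−εΔ} < 1/ε`, because `εΔ < 1 + εΔ ≤ e^{εΔ}`.
-/

open Finset

def countA {n : ℕ} (θ : Fin n → Bool) : ℤ := (univ.filter (fun j => θ j = true)).card

def countB {n : ℕ} (θ : Fin n → Bool) : ℤ := (univ.filter (fun j => θ j = false)).card

/-- The noisy majority election mechanism: output A (`true`) iff `#A − #B ≥ r`. -/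
def elect {n : ℕ} (θ : Fin n → Bool) (r : ℤ) : Bool := decide (countA θ - countB θ ≥ r)

/-- Number of voters whose preferred candidate is `o`. -/
def satisfied {n : ℕ} (θ : Fin n → Bool) (o : Bool) : ℤ :=
  (univ.filter (fun j => θ j = o)).card

/-- The two-sided discrete Laplace pmf on ℤ: `Pr[r=k] = e^{−ε|k|}(1−e^{−ε})/(1+e^{−ε})`. -/
noncomputable def lapPMF (ε : ℝ) (k : ℤ) : ℝ :=
  Real.exp (-ε * |(k : ℝ)|) * (1 - Real.exp (-ε)) / (1 + Real.exp (-ε))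

open Real

noncomputable def lapTail (ε : ℝ) (m : ℕ) : ℝ := exp (-ε) ^ m / (1 + exp (-ε))

section DiscreteLaplace

variable {ε : ℝ}

lemma lapPMF_eq_mul_pow (k : ℤ) :
    lapPMF ε k = (1 - exp (-ε)) / (1 + exp (-ε)) * exp (-ε) ^ k.natAbs := by
  rw [lapPMF, ← exp_nat_mul, Nat.cast_natAbs, Int.cast_abs]
  ring_nf

lemma hasSum_indicator_range_lapPMF (hε : 0 < ε) (m : ℕ) {g : ℕ → ℤ}
    (hg : Function.Injective g) (hgm : ∀ j, (g j).natAbs = m + j) :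
    HasSum ((Set.range g).indicator (lapPMF ε)) (lapTail ε m) := by
  rw [← hasSum_subtype_iff_indicator]
  refine hg.hasSum_range_iff.2 ?_
  have hq : exp (-ε) < 1 := exp_lt_one_iff.2 (neg_lt_zero.2 hε)
  set c := (1 - exp (-ε)) / (1 + exp (-ε)) * exp (-ε) ^ m with hc
  have hterm : lapPMF ε ∘ g = fun j => c * exp (-ε) ^ j := by
    funext j
    rw [Function.comp_apply, lapPMF_eq_mul_pow, hgm, pow_add]
    ring
  have hsum : lapTail ε m = c * (1 - exp (-ε))⁻¹ := by
    have : 1 - exp (-ε) ≠ 0 := by linarith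
    rw [lapTail, hc]
    field_simp
  rw [hterm, hsum]
  exact (hasSum_geometric_of_lt_one (exp_pos _).le hq).mul_left c

lemma hasSum_indicator_Ici_lapPMF (hε : 0 < ε) (m : ℕ) :
    HasSum ((Set.Ici (m : ℤ)).indicator (lapPMF ε)) (lapTail ε m) := by
  have hrange : Set.Ici (m : ℤ) = Set.range (fun j : ℕ => (m : ℤ) + j) := by
    ext x
    exact ⟨fun hx => ⟨(x - m).toNat, by rw [Set.mem_Ici] at hx; dsimp only; omega⟩,
      by rintro ⟨j, rfl⟩; simp⟩
  rw [hrange]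
  exact hasSum_indicator_range_lapPMF hε m (fun i j h => by simpa using h) (fun j => by omega)

lemma hasSum_indicator_Iic_lapPMF (hε : 0 < ε) (m : ℕ) :
    HasSum ((Set.Iic (-(m : ℤ))).indicator (lapPMF ε)) (lapTail ε m) := by
  have hrange : Set.Iic (-(m : ℤ)) = Set.range (fun j : ℕ => -((m : ℤ) + j)) := by
    ext x
    exact ⟨fun hx => ⟨(-m - x).toNat, by rw [Set.mem_Iic] at hx; dsimp only; omega⟩,
      by rintro ⟨j, rfl⟩; simp⟩
  rw [hrange]
  exact hasSum_indicator_range_lapPMF hε m (fun i j h => by simpa using h) (fun j => by omega)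

lemma hasSum_lapPMF (hε : 0 < ε) : HasSum (lapPMF ε) 1 := by
  have hcompl : (Set.Ici ((0 : ℕ) : ℤ))ᶜ = Set.Iic (-((1 : ℕ) : ℤ)) := by
    ext x
    simp only [Set.mem_compl_iff, Set.mem_Ici, Set.mem_Iic]
    omega
  have h := (hasSum_indicator_Ici_lapPMF hε 0).add (hasSum_indicator_Iic_lapPMF hε 1)
  have hq : 1 + exp (-ε) ≠ 0 := by positivity
  simp only [← hcompl, Set.indicator_self_add_compl_apply] at h
  rwa [lapTail, lapTail, ← add_div, pow_zero, pow_one, div_self hq] at h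

lemma hasSum_lapPMF_mul_ite_le_natCast (hε : 0 < ε) (m : ℕ) (a b : ℝ) :
    HasSum (fun k : ℤ => lapPMF ε k * if k ≤ m then a else b)
      (a - (a - b) * lapTail ε (m + 1)) := by
  have h := ((hasSum_lapPMF hε).mul_right a).sub
    ((hasSum_indicator_Ici_lapPMF hε (m + 1)).mul_left (a - b))
  rw [one_mul] at h
  refine h.congr_fun fun k => ?_
  simp only [Set.indicator_apply, Set.mem_Ici]
  split_ifs <;> first | omega | ring

lemma hasSum_lapPMF_mul_ite_le_neg_natCast (hε : 0 < ε) (m : ℕ) (a b : ℝ) :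
    HasSum (fun k : ℤ => lapPMF ε k * if k ≤ -(m : ℤ) then a else b)
      (b + (a - b) * lapTail ε m) := by
  have h := ((hasSum_lapPMF hε).mul_right b).add
    ((hasSum_indicator_Iic_lapPMF hε m).mul_left (a - b))
  rw [one_mul] at h
  refine h.congr_fun fun k => ?_
  simp only [Set.indicator_apply, Set.mem_Iic]
  split_ifs <;> ring

lemma natCast_mul_exp_neg_pow_lt (hε : 0 < ε) (m : ℕ) : (m : ℝ) * exp (-ε) ^ m < 1 / ε := by
  rw [← exp_nat_mul, mul_neg, exp_neg, ← div_eq_mul_inv, div_lt_div_iff₀ (exp_pos _) hε]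
  linarith [add_one_le_exp (m * ε)]

lemma natCast_mul_lapTail_lt (hε : 0 < ε) {m m' : ℕ} (h : m ≤ m') :
    (m : ℝ) * lapTail ε m' < 1 / ε := by
  have hq : exp (-ε) ≤ 1 := exp_le_one_iff.2 (neg_nonpos.2 hε.le)
  calc (m : ℝ) * lapTail ε m' ≤ m * exp (-ε) ^ m := by
        rw [lapTail]
        gcongr
        calc exp (-ε) ^ m' / (1 + exp (-ε)) ≤ exp (-ε) ^ m' :=
              div_le_self (by positivity) (by linarith [exp_pos (-ε)])
          _ ≤ exp (-ε) ^ m := pow_le_pow_of_le_one (exp_pos _).le hq h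
    _ < 1 / ε := natCast_mul_exp_neg_pow_lt hε m

end DiscreteLaplace

lemma satisfied_elect {n : ℕ} (θ : Fin n → Bool) (k : ℤ) :
    satisfied θ (elect θ k) =
      if k ≤ satisfied θ true - satisfied θ false then satisfied θ true else satisfied θ false := by
  rw [elect, show countA θ - countB θ = satisfied θ true - satisfied θ false from rfl]
  split_ifs with h <;> simp [h]

/-- for the noisy majority election mechanism, the expected number of
voters whose preferred candidate wins exceeds `max_{o'} #{i : θ_i = o'} − 1/ε`. -/
theorem stmt9 {n : ℕ} (ε : ℝ) (hε : 0 < ε) (θ : Fin n → Bool) :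
    (∑' k : ℤ, lapPMF ε k * (satisfied θ (elect θ k) : ℝ))
      > (max (satisfied θ true) (satisfied θ false) : ℝ) - 1 / ε := by
  simp_rw [satisfied_elect, apply_ite (Int.cast : ℤ → ℝ)]
  set a := satisfied θ true
  set b := satisfied θ false
  rcases le_total b a with hba | hab
  · obtain ⟨m, hm⟩ := Int.eq_ofNat_of_zero_le (sub_nonneg.2 hba)
    have hm' : (a : ℝ) - b = m := by exact_mod_cast hm
    rw [hm, (hasSum_lapPMF_mul_ite_le_natCast hε m a b).tsum_eq,
      max_eq_left (by exact_mod_cast hba), hm']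
    linarith [natCast_mul_lapTail_lt hε m.le_succ]
  · obtain ⟨m, hm⟩ := Int.exists_eq_neg_ofNat (sub_nonpos.2 hab)
    have hm' : (a : ℝ) - b = -m := by exact_mod_cast hm
    rw [hm, (hasSum_lapPMF_mul_ite_le_neg_natCast hε m a b).tsum_eq,
      max_eq_right (by exact_mod_cast hab), hm']
    linarith [natCast_mul_lapTail_lt hε (le_refl m)]
end

section
/- For the single-coordinate case: let h, h' ∈ ℕ^q differ by h'_j = h_j + 1 and h'_k = h_k for k≠j, and let r ∈ ℕ^q have independent coordinates with Pr[r_j=k] = (1−e^{−ε/2})e^{−εk/2}. Then for every j* ∈ [q], Pr[Med(h+r) = j*] ≤ e^{ε/2}·Pr[Med(h'+r) = j*] and Pr[Med(h'+r) = j*] ≤ e^{ε/2}·Pr[Med(h+r) = j*]. -/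
/-!
Write `imbalance z k = Σ_{i ≤ k} z_i - Σ_{i > k} z_i`, so that `Med z` is the least `k` with
nonnegative imbalance. Adding one unit at coordinate `i` shifts the imbalance at `k` by `+1` if
`i ≤ k` and by `-1` otherwise. So if `Med (h + r) = j*`, adding a unit at `j*` to the noise lowers
the imbalances below `j*` and raises the one at `j*`, which absorbs the unit change of the
histogram: `Med (h' + r + e_{j*}) = j*`, and likewise with `h` and `h'` swapped. The map
`r ↦ r + e_{j*}` is injective and multiplies the noise density by exactly `e^{-ε/2}`.
-/

open Finset

/-- `Med z` is the minimum `k` with `Σ_{i≤k} z_i ≥ Σ_{i>k} z_i` (the set of such `k`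
is always nonempty since `k` maximal works). -/
def Med {q : ℕ} (z : Fin (q + 1) → ℕ) : Fin (q + 1) :=
  if h : (univ.filter (fun k : Fin (q + 1) =>
      ∑ i ∈ univ.filter (fun i => i ≤ k), z i ≥ ∑ i ∈ univ.filter (fun i => k < i), z i)).Nonempty
  then (univ.filter (fun k : Fin (q + 1) =>
      ∑ i ∈ univ.filter (fun i => i ≤ k), z i ≥ ∑ i ∈ univ.filter (fun i => k < i), z i)).min' h
  else 0

/-- Histogram of reported types. -/
def hist {n q : ℕ} (θ : Fin n → Fin (q + 1)) : Fin (q + 1) → ℕ :=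
  fun j => (univ.filter (fun i => θ i = j)).card

/-- Geometric-type noise pmf on ℕ: `Pr[r=k] = (1−e^{−ε/2})·e^{−εk/2}`. -/
noncomputable def geoPMF (ε : ℝ) (k : ℕ) : ℝ :=
  (1 - Real.exp (-ε / 2)) * Real.exp (-ε * k / 2)

/-- Product pmf of independent geometric noises. -/
noncomputable def noisePMF {q : ℕ} (ε : ℝ) (r : Fin (q + 1) → ℕ) : ℝ :=
  ∏ j, geoPMF ε (r j)

section Imbalance

variable {q : ℕ}

def sideSign (i k : Fin (q + 1)) : ℤ := if i ≤ k then 1 else -1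

lemma sideSign_self (i : Fin (q + 1)) : sideSign i i = 1 := if_pos le_rfl

lemma sideSign_of_lt {i k : Fin (q + 1)} (h : k < i) : sideSign i k = -1 := if_neg (not_le.mpr h)

lemma abs_sideSign_le_one (i k : Fin (q + 1)) : |sideSign i k| ≤ 1 := by
  unfold sideSign; split_ifs <;> simp

def imbalance (z : Fin (q + 1) → ℕ) (k : Fin (q + 1)) : ℤ := ∑ i, sideSign i k * z i

lemma imbalance_add (z w : Fin (q + 1) → ℕ) (k : Fin (q + 1)) :
    imbalance (z + w) k = imbalance z k + imbalance w k := by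
  simp only [imbalance, Pi.add_apply, Nat.cast_add, mul_add, sum_add_distrib]

lemma imbalance_single (i k : Fin (q + 1)) : imbalance (Pi.single i 1) k = sideSign i k := by
  simp [imbalance, Pi.single_apply]

lemma imbalance_nonneg_iff (z : Fin (q + 1) → ℕ) (k : Fin (q + 1)) :
    0 ≤ imbalance z k ↔
      ∑ i ∈ univ.filter (fun i => k < i), z i ≤ ∑ i ∈ univ.filter (fun i => i ≤ k), z i := by
  simp only [imbalance, sideSign, ite_mul, one_mul, neg_one_mul, sum_ite, sum_neg_distrib, not_le]
  rw [← Nat.cast_sum, ← Nat.cast_sum]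
  omega

lemma med_eq_iff (z : Fin (q + 1) → ℕ) (m : Fin (q + 1)) :
    Med z = m ↔ 0 ≤ imbalance z m ∧ ∀ k < m, imbalance z k < 0 := by
  have hlast : 0 ≤ imbalance z (Fin.last q) := by
    simpa [imbalance, sideSign, Fin.le_last] using sum_nonneg fun i _ => (z i).cast_nonneg
  have hne : (univ.filter (fun k : Fin (q + 1) =>
      ∑ i ∈ univ.filter (fun i => i ≤ k), z i ≥ ∑ i ∈ univ.filter (fun i => k < i), z i)).Nonempty :=
    ⟨Fin.last q, by simpa [← imbalance_nonneg_iff] using hlast⟩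
  rw [Med, dif_pos hne, min'_eq_iff]
  simp only [mem_filter, mem_univ, true_and, ge_iff_le, ← imbalance_nonneg_iff]
  refine and_congr_right fun _ => ⟨fun h k hk => ?_, fun h k hk => ?_⟩
  · by_contra hk'; exact (h k (not_lt.mp hk')).not_gt hk
  · by_contra hmk; exact (h k (not_le.mp hmk)).not_ge hk

lemma med_eq_of_imbalance_le {z w : Fin (q + 1) → ℕ} {m : Fin (q + 1)} (hz : Med z = m)
    (hbelow : ∀ k < m, imbalance w k ≤ imbalance z k) (hat : imbalance z m ≤ imbalance w m) :
    Med w = m := by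
  rw [med_eq_iff] at hz ⊢
  exact ⟨hz.1.trans hat, fun k hk => (hbelow k hk).trans_lt (hz.2 k hk)⟩

lemma med_add_single_add_single {h r : Fin (q + 1) → ℕ} {m : Fin (q + 1)} (j : Fin (q + 1))
    (hm : Med (h + r) = m) : Med (h + Pi.single j 1 + (r + Pi.single m 1)) = m := by
  have himb : ∀ k, imbalance (h + Pi.single j 1 + (r + Pi.single m 1)) k
      = imbalance (h + r) k + sideSign j k + sideSign m k := by
    intro k; simp only [imbalance_add, imbalance_single]; ring
  refine med_eq_of_imbalance_le hm (fun k hk => ?_) ?_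
  · have := abs_le.mp (abs_sideSign_le_one j k)
    linarith [himb k, sideSign_of_lt hk]
  · have := abs_le.mp (abs_sideSign_le_one j m)
    linarith [himb m, sideSign_self m]

lemma med_add_single_of_med_add_single {h r : Fin (q + 1) → ℕ} {m j : Fin (q + 1)}
    (hm : Med (h + Pi.single j 1 + r) = m) : Med (h + (r + Pi.single m 1)) = m := by
  have himb : ∀ k, imbalance (h + (r + Pi.single m 1)) k
      = imbalance (h + Pi.single j 1 + r) k - sideSign j k + sideSign m k := by
    intro k; simp only [imbalance_add, imbalance_single]; ring
  refine med_eq_of_imbalance_le hm (fun k hk => ?_) ?_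
  · have := abs_le.mp (abs_sideSign_le_one j k)
    linarith [himb k, sideSign_of_lt hk]
  · have := abs_le.mp (abs_sideSign_le_one j m)
    linarith [himb m, sideSign_self m]

end Imbalance

lemma summable_pi_prod {ι β : Type*} [Fintype ι] {f : β → ℝ} (hf0 : ∀ b, 0 ≤ f b)
    (hf : Summable f) :
    Summable fun x : ι → β => ∏ i, f (x i) := by
  classical
  refine summable_of_sum_le (fun x => prod_nonneg fun i _ => hf0 (x i))
    (c := ∏ _i : ι, ∑' b, f b) fun u => ?_
  have hu : u ⊆ Fintype.piFinset fun i => u.image (· i) := fun x hx =>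
    Fintype.mem_piFinset.mpr fun i => mem_image_of_mem (· i) hx
  calc ∑ x ∈ u, ∏ i, f (x i)
      ≤ ∑ x ∈ Fintype.piFinset (fun i => u.image (· i)), ∏ i, f (x i) :=
        sum_le_sum_of_subset_of_nonneg hu fun x _ _ => prod_nonneg fun i _ => hf0 (x i)
    _ = ∏ i, ∑ b ∈ u.image (· i), f b := (prod_univ_sum _ _).symm
    _ ≤ ∏ _i : ι, ∑' b, f b :=
        prod_le_prod (fun i _ => sum_nonneg fun b _ => hf0 b)
          fun i _ => hf.sum_le_tsum _ fun b _ => hf0 b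

lemma tsum_le_mul_tsum_of_injective {α β : Type*} {f : α → ℝ} {g : β → ℝ} {c : ℝ}
    (φ : α → β) (hφ : Function.Injective φ) (hc : 0 ≤ c) (hg0 : 0 ≤ g)
    (hf : Summable f) (hg : Summable g) (hfg : ∀ a, f a ≤ c * g (φ a)) :
    ∑' a, f a ≤ c * ∑' b, g b :=
  (hf.tsum_le_tsum_of_inj φ hφ (fun b _ => mul_nonneg hc (hg0 b)) hfg (hg.mul_left c)).trans_eq
    tsum_mul_left

section Noise

variable {ε : ℝ}

lemma geoPMF_eq_mul_pow (ε : ℝ) (k : ℕ) :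
    geoPMF ε k = (1 - Real.exp (-ε / 2)) * Real.exp (-ε / 2) ^ k := by
  rw [geoPMF, ← Real.exp_nat_mul]
  ring_nf

lemma geoPMF_succ (ε : ℝ) (k : ℕ) : geoPMF ε (k + 1) = Real.exp (-ε / 2) * geoPMF ε k := by
  rw [geoPMF_eq_mul_pow, geoPMF_eq_mul_pow, pow_succ]
  ring

lemma geoPMF_nonneg (hε : 0 < ε) (k : ℕ) : 0 ≤ geoPMF ε k := by
  have : Real.exp (-ε / 2) ≤ 1 := Real.exp_le_one_iff.mpr (by linarith)
  rw [geoPMF_eq_mul_pow]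
  exact mul_nonneg (by linarith) (pow_nonneg (Real.exp_nonneg _) k)

lemma summable_geoPMF (hε : 0 < ε) : Summable (geoPMF ε) := by
  have hlt : Real.exp (-ε / 2) < 1 := Real.exp_lt_one_iff.mpr (by linarith)
  exact ((summable_geometric_of_lt_one (Real.exp_nonneg _) hlt).mul_left _).congr fun k =>
    (geoPMF_eq_mul_pow ε k).symm

variable {q : ℕ}

lemma noisePMF_nonneg (hε : 0 < ε) (r : Fin (q + 1) → ℕ) : 0 ≤ noisePMF ε r :=
  prod_nonneg fun i _ => geoPMF_nonneg hε (r i)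

lemma summable_noisePMF (hε : 0 < ε) : Summable (noisePMF (q := q) ε) :=
  summable_pi_prod (geoPMF_nonneg hε) (summable_geoPMF hε)

lemma noisePMF_add_single (ε : ℝ) (r : Fin (q + 1) → ℕ) (m : Fin (q + 1)) :
    noisePMF ε (r + Pi.single m 1) = Real.exp (-ε / 2) * noisePMF ε r := by
  classical
  rw [noisePMF, noisePMF, ← mul_prod_erase univ _ (mem_univ m),
    ← mul_prod_erase univ _ (mem_univ m), prod_congr rfl fun i hi => by
      rw [Pi.add_apply, Pi.single_eq_of_ne (ne_of_mem_erase hi), add_zero]]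
  simp only [Pi.add_apply, Pi.single_eq_same, geoPMF_succ, mul_assoc]

noncomputable def noisyMedianProb (ε : ℝ) (a : Fin (q + 1) → ℕ) (m : Fin (q + 1)) : ℝ :=
  ∑' r : Fin (q + 1) → ℕ, if Med (a + r) = m then noisePMF ε r else 0

lemma noisyMedianProb_le (hε : 0 < ε) {a b : Fin (q + 1) → ℕ} {m : Fin (q + 1)}
    (hmed : ∀ r, Med (a + r) = m → Med (b + (r + Pi.single m 1)) = m) :
    noisyMedianProb ε a m ≤ Real.exp (ε / 2) * noisyMedianProb ε b m := by
  have hbound : ∀ (c : Fin (q + 1) → ℕ) r,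
      0 ≤ (if Med (c + r) = m then noisePMF ε r else 0) ∧
        (if Med (c + r) = m then noisePMF ε r else 0) ≤ noisePMF ε r := fun c r => by
    split_ifs <;> simp [noisePMF_nonneg hε r]
  have hsum : ∀ c : Fin (q + 1) → ℕ,
      Summable fun r => if Med (c + r) = m then noisePMF ε r else 0 := fun c =>
    (summable_noisePMF hε).of_nonneg_of_le (fun r => (hbound c r).1) fun r => (hbound c r).2
  refine tsum_le_mul_tsum_of_injective (· + Pi.single m 1) (add_left_injective _)
    (Real.exp_pos _).le (fun r => (hbound b r).1) (hsum a) (hsum b) fun r => ?_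
  by_cases hr : Med (a + r) = m
  · rw [if_pos hr, if_pos (hmed r hr), noisePMF_add_single, ← mul_assoc, ← Real.exp_add,
      show ε / 2 + -ε / 2 = 0 by ring, Real.exp_zero, one_mul]
  · rw [if_neg hr]
    exact mul_nonneg (Real.exp_pos _).le (hbound b _).1

end Noise

lemma update_add_eq_add_single {ι M : Type*} [DecidableEq ι] [AddZeroClass M] (x : ι → M)
    (i : ι) (c : M) : Function.update x i (x i + c) = x + Pi.single i c := by
  ext k
  rcases eq_or_ne k i with rfl | hk <;> simp [*]

/-- single-coordinate case of the differential privacy of the noisy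
median. If `h' = h` except `h'_j = h_j + 1`, then for every `j*` the probabilities
of the noisy median being `j*` under `h` and `h'` differ by a factor at most `e^{ε/2}`. -/
theorem stmt12 {q : ℕ} (ε : ℝ) (hε : 0 < ε)
    (h h' : Fin (q + 1) → ℕ) (j : Fin (q + 1))
    (hdiff : h' = Function.update h j (h j + 1)) (jstar : Fin (q + 1)) :
    (∑' r : Fin (q + 1) → ℕ,
        if Med (fun k => h k + r k) = jstar then noisePMF ε r else 0)
      ≤ Real.exp (ε / 2) *
        (∑' r : Fin (q + 1) → ℕ,
          if Med (fun k => h' k + r k) = jstar then noisePMF ε r else 0) ∧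
    (∑' r : Fin (q + 1) → ℕ,
        if Med (fun k => h' k + r k) = jstar then noisePMF ε r else 0)
      ≤ Real.exp (ε / 2) *
        (∑' r : Fin (q + 1) → ℕ,
          if Med (fun k => h k + r k) = jstar then noisePMF ε r else 0) := by
  rw [hdiff, update_add_eq_add_single]
  exact ⟨noisyMedianProb_le hε fun _ => med_add_single_add_single j,
    noisyMedianProb_le hε fun _ => med_add_single_of_med_add_single⟩
end
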